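/- arXiv:1102.4085 — 2 statements merged into one kernel-verified Lean document; each statement's English description precedes it below -/
import Mathlib

section
/- Fix θ > 0 and an integer m ≥ 2. The function f(x₁,...,x_{m−1}) = (1/θ)·((1+θ)/∏_{s=1}^{m−1}(1+θx_s) − 1), defined on the nonnegative orthant, satisfies: for every t ∈ {1,...,m−1} and all x₁,...,x_{m−1} ≥ 0, f(x₁,...,x_{m−1}) ≥ −Σ_{s≠t} x_s − (1/(1+θ))·(x_t − 1). That is, f lies above each of the tangent hyperplanes at the points with a single coordinate equal to 1 and the rest 0. -/
open MeasureTheory ProbabilityTheory Real Filter Set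

/-!
Split off the factor `1 + θ x_t` of the product: with `a = ∏_{s ≠ t} (1 + θ x_s)` and
`c = (1 + θ x_t) / (1 + θ)`, the claim becomes `2 - θ S - c ≤ (a c)⁻¹`, where `S = ∑_{s ≠ t} x_s`.
This follows from `log y ≤ y - 1` used three times: for `y = (a c)⁻¹`, for `y = c`, and
factorwise for `log a ≤ θ S`.
-/

lemma Real.one_sub_log_le_inv {y : ℝ} (hy : 0 < y) : 1 - log y ≤ y⁻¹ := by
  have := log_le_sub_one_of_pos (inv_pos.mpr hy)
  rw [log_inv] at this
  linarith

lemma Real.log_prod_one_add_mul_le {ι : Type*} (s : Finset ι) {θ : ℝ} (hθ : 0 ≤ θ) {x : ι → ℝ}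
    (hx : ∀ i, 0 ≤ x i) : log (∏ i ∈ s, (1 + θ * x i)) ≤ θ * ∑ i ∈ s, x i := by
  have hpos : 0 < ∏ i ∈ s, (1 + θ * x i) :=
    Finset.prod_pos fun i _ ↦ by nlinarith [hx i]
  rw [log_le_iff_le_exp hpos, Finset.mul_sum]
  exact prod_one_add_le_exp_sum s fun i ↦ mul_nonneg hθ (hx i)

lemma Real.tangent_plane_le_of_log_le {θ a S y : ℝ} (hθ : 0 < θ) (ha : 0 < a)
    (hy : 0 < 1 + θ * y) (haS : log a ≤ θ * S) :
    -S - (1 / (1 + θ)) * (y - 1) ≤ (1 / θ) * ((1 + θ) / (a * (1 + θ * y)) - 1) := by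
  have hθ1 : 0 < 1 + θ := by linarith
  set c := (1 + θ * y) / (1 + θ) with hc_def
  have hc : 0 < c := div_pos hy hθ1
  have hinv : (1 + θ) / (a * (1 + θ * y)) = (a * c)⁻¹ := by
    rw [hc_def]; field_simp
  have hlog_c := log_le_sub_one_of_pos hc
  have hkey : 2 - θ * S - c ≤ (a * c)⁻¹ := by
    have := one_sub_log_le_inv (mul_pos ha hc)
    rw [log_mul ha.ne' hc.ne'] at this
    linarith
  have hlhs : -S - (1 / (1 + θ)) * (y - 1) = (1 / θ) * (1 - θ * S - c) := by
    rw [hc_def]; field_simp; ring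
  rw [hinv, hlhs]
  exact mul_le_mul_of_nonneg_left (by linarith) (by positivity)

theorem stmt7_general (θ : ℝ) (hθ : 0 < θ) (m : ℕ) (x : Fin (m-1) → ℝ)
    (hx : ∀ s, 0 ≤ x s) (t : Fin (m-1)) :
    (1/θ) * ((1 + θ) / (∏ s, (1 + θ * x s)) - 1) ≥
      -(∑ s ∈ Finset.univ.erase t, x s) - (1/(1+θ)) * (x t - 1) := by
  rw [← Finset.prod_erase_mul _ _ (Finset.mem_univ t)]
  exact tangent_plane_le_of_log_le hθ
    (Finset.prod_pos fun s _ ↦ by nlinarith [hx s]) (by nlinarith [hx t])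
    (log_prod_one_add_mul_le _ hθ.le hx)

theorem stmt7 (θ : ℝ) (hθ : 0 < θ) (m : ℕ) (hm : 2 ≤ m) (x : Fin (m-1) → ℝ)
    (hx : ∀ s, 0 ≤ x s) (t : Fin (m-1)) :
    (1/θ) * ((1 + θ) / (∏ s, (1 + θ * x s)) - 1) ≥
      -(∑ s ∈ Finset.univ.erase t, x s) - (1/(1+θ)) * (x t - 1) :=
  stmt7_general θ hθ m x hx t
end

section
/- Let γ₁, γ₂ be independent exponential random variables with rates 1/μ₁, 1/μ₂ (means μ₁, μ₂), and let a, b be reals with b > 0 and a + b > 0. Define X = a·max{γ₁,γ₂} + b·(γ₁+γ₂). Then for x ≥ 0, Pr[X > x] = e^{−xτ₁}·(cτ₂)/(cτ₁+cτ₂−τ₁) + e^{−xτ₂}·(cτ₁)/(cτ₁+cτ₂−τ₂) + e^{−cx(τ₁+τ₂)}·τ₁τ₂(1−2c)/((cτ₁+cτ₂−τ₁)(cτ₁+cτ₂−τ₂)), where τ_k = 1/((a+b)μ_k) and c = (a+b)/(a+2b), provided the denominators are nonzero. -/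
/-!
Since `a * max u v + b * (u + v) = (a + b) * max u v + b * min u v` with `a + b, b > 0`, the
variable `X` is strictly increasing in `γ₂`: `X > x` iff `γ₂` exceeds a threshold that is
piecewise linear in `γ₁`, with a kink at `γ₁ = x / (a + 2b)` and negative beyond `x / (a + b)`.
By independence, conditioning on `γ₁` gives `P(X > x) = E[exp(-max(threshold(γ₁), 0) / μ₂)]`,
an integral against the exponential density of `γ₁` that splits into three elementary
exponential integrals over `[0, x/(a+2b)]`, `[x/(a+2b), x/(a+b)]` and `(x/(a+b), ∞)`.
-/

open MeasureTheory ProbabilityTheory Real Filter Set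

lemma map_eq_expMeasure_of_cdf {Ω : Type*} [MeasurableSpace Ω] {μ : Measure Ω}
    [IsProbabilityMeasure μ] {γ : Ω → ℝ} (hγ : Measurable γ) (hnn : ∀ ω, 0 ≤ γ ω) {m : ℝ}
    (hm : 0 < m) (hcdf : ∀ x : ℝ, 0 ≤ x → (μ {ω | γ ω ≤ x}).toReal = 1 - exp (-x / m)) :
    μ.map γ = expMeasure m⁻¹ := by
  have := Measure.isProbabilityMeasure_map (μ := μ) hγ.aemeasurable
  have := isProbabilityMeasure_expMeasure (inv_pos.2 hm)
  refine Measure.eq_of_cdf _ _ ?_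
  ext x
  rw [cdf_eq_real, map_measureReal_apply hγ measurableSet_Iic, cdf_expMeasure_eq (inv_pos.2 hm)]
  split_ifs with hx
  · rw [measureReal_def, show -(m⁻¹ * x) = -x / m by ring]
    exact hcdf x hx
  · have : γ ⁻¹' Iic x = ∅ := eq_empty_of_forall_notMem fun ω hω => hx ((hnn ω).trans hω)
    simp [this]

lemma measureReal_expMeasure_Ioi {r : ℝ} (hr : 0 < r) (t : ℝ) :
    (expMeasure r).real (Ioi t) = exp (-(r * max t 0)) := by
  have := isProbabilityMeasure_expMeasure hr
  rw [← compl_Iic, probReal_compl_eq_one_sub measurableSet_Iic, ← cdf_eq_real,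
    cdf_expMeasure_eq hr]
  split_ifs with ht
  · simp [max_eq_left ht]
  · simp [max_eq_right (not_le.1 ht).le]

lemma integral_expMeasure_eq_integral_Ioi {r : ℝ} (hr : 0 < r) (f : ℝ → ℝ) :
    ∫ u, f u ∂expMeasure r = ∫ u in Ioi 0, r * exp (-(r * u)) * f u := by
  change ∫ u, f u ∂volume.withDensity (fun u => ENNReal.ofReal (exponentialPDFReal r u)) = _
  rw [integral_withDensity_eq_integral_toReal_smul
    (measurable_exponentialPDFReal r).ennreal_ofReal (ae_of_all _ fun _ => ENNReal.ofReal_lt_top),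
    ← integral_Ici_eq_integral_Ioi, ← setIntegral_eq_integral_of_forall_compl_eq_zero]
  · refine setIntegral_congr_fun measurableSet_Ici fun u hu => ?_
    rw [← exponentialPDF, exponentialPDF_of_nonneg hu, ENNReal.toReal_ofReal (by positivity),
      smul_eq_mul]
  · intro u hu
    rw [← exponentialPDF, exponentialPDF_of_neg (not_le.1 hu), ENNReal.toReal_zero, zero_smul]

lemma ProbabilityTheory.IndepFun.measureReal_preimage_eq_integral {Ω α β : Type*}
    [MeasurableSpace Ω] [MeasurableSpace α] [MeasurableSpace β] {μ : Measure Ω}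
    [IsProbabilityMeasure μ] {X : Ω → α} {Y : Ω → β} (hX : Measurable X) (hY : Measurable Y) (hXY : IndepFun X Y μ)
    {S : Set (α × β)} (hS : MeasurableSet S) :
    μ.real ((fun ω => (X ω, Y ω)) ⁻¹' S) = ∫ u, (μ.map Y).real (Prod.mk u ⁻¹' S) ∂μ.map X := by
  have := Measure.isProbabilityMeasure_map (μ := μ) hY.aemeasurable
  have hprod : μ.map (fun ω => (X ω, Y ω)) = (μ.map X).prod (μ.map Y) :=
    (indepFun_iff_map_prod_eq_prod_map_map hX.aemeasurable hY.aemeasurable).1 hXY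
  rw [← map_measureReal_apply (hX.prodMk hY) hS, hprod, measureReal_def,
    Measure.prod_apply hS, ← integral_toReal (measurable_measure_prodMk_left hS).aemeasurable
    (ae_of_all _ fun _ => measure_lt_top _ _)]
  rfl

lemma ProbabilityTheory.IndepFun.measureReal_lt_eq_integral_exp {Ω : Type*} [MeasurableSpace Ω]
    {μ : Measure Ω} [IsProbabilityMeasure μ] {X Y : Ω → ℝ} (hX : Measurable X)
    (hY : Measurable Y) (hXY : IndepFun X Y μ) {s : ℝ} (hs : 0 < s)
    (hY_law : μ.map Y = expMeasure s) {h : ℝ → ℝ} (hh : Measurable h) :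
    μ.real {ω | h (X ω) < Y ω} = ∫ u, exp (-(s * max (h u) 0)) ∂μ.map X := by
  have hS : MeasurableSet {v : ℝ × ℝ | h v.1 < v.2} :=
    measurableSet_lt (hh.comp measurable_fst) measurable_snd
  have hsec : ∀ u, Prod.mk u ⁻¹' {v : ℝ × ℝ | h v.1 < v.2} = Ioi (h u) := fun _ => rfl
  simp_rw [← measureReal_expMeasure_Ioi hs, ← hY_law, ← hsec]
  exact hXY.measureReal_preimage_eq_integral hX hY hS

lemma mul_max_add_mul_add_eq (a b u v : ℝ) :
    a * max u v + b * (u + v) = (a + b) * max u v + b * min u v := by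
  rw [← min_add_max u v]
  ring

noncomputable def maxMinThreshold (p q x u : ℝ) : ℝ :=
  if (p + q) * u ≤ x then (x - q * u) / p else (x - p * u) / q

lemma lt_mul_max_add_mul_min_iff {p q : ℝ} (hp : 0 < p) (hq : 0 < q) (x u v : ℝ) :
    x < p * max u v + q * min u v ↔ maxMinThreshold p q x u < v := by
  unfold maxMinThreshold
  rcases le_total u v with huv | hvu
  · rw [max_eq_right huv, min_eq_left huv]
    split_ifs with hx
    · rw [div_lt_iff₀ hp]; constructor <;> intro <;> linarith
    · rw [div_lt_iff₀ hq]; constructor <;> intro <;> nlinarith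
  · rw [max_eq_left hvu, min_eq_right hvu]
    split_ifs with hx
    · rw [div_lt_iff₀ hp]; constructor <;> intro <;> nlinarith
    · rw [div_lt_iff₀ hq]; constructor <;> intro <;> linarith

lemma measurable_maxMinThreshold (p q x : ℝ) : Measurable (maxMinThreshold p q x) :=
  Measurable.ite (measurableSet_le (by fun_prop) measurable_const) (by fun_prop) (by fun_prop)

lemma integral_exp_mul_add {k : ℝ} (hk : k ≠ 0) (m a b : ℝ) :
    ∫ t in a..b, exp (k * t + m) = (exp (k * b + m) - exp (k * a + m)) / k := by
  rw [intervalIntegral.integral_comp_mul_add (fun t => exp t) hk, integral_exp, smul_eq_mul,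
    inv_mul_eq_div]

section ThresholdIntegral

variable {r s p q x : ℝ}

lemma integral_lower_maxMinThreshold (hp : 0 < p) (hq : 0 < q) (hx : 0 ≤ x)
    (hk : s * q - r * p ≠ 0) :
    ∫ u in 0..x / (p + q), r * exp (-(r * u)) * exp (-(s * max (maxMinThreshold p q x u) 0)) =
      r * p / (s * q - r * p) * (exp (-((r + s) * x / (p + q))) - exp (-(s * x / p))) := by
  have hk' : s * q / p - r ≠ 0 := by
    rw [div_sub' hp.ne']
    exact div_ne_zero (fun h => hk (by linarith)) hp.ne'
  have hu₀ : 0 ≤ x / (p + q) := by positivity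
  calc _ = ∫ u in 0..x / (p + q), r * exp ((s * q / p - r) * u + -(s * x / p)) := by
        refine intervalIntegral.integral_congr_ae (ae_of_all _ fun u hu => ?_)
        rw [uIoc_of_le hu₀] at hu
        have hux : (p + q) * u ≤ x := (le_div_iff₀' (by positivity)).1 hu.2
        have hthr : maxMinThreshold p q x u = (x - q * u) / p := if_pos hux
        rw [hthr, max_eq_left (div_nonneg (by nlinarith [hu.1]) hp.le), mul_assoc, ← exp_add]
        congr 2
        field_simp
        ring
    _ = _ := by
      have hexp : (s * q / p - r) * (x / (p + q)) + -(s * x / p) = -((r + s) * x / (p + q)) := by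
        field_simp
        ring
      rw [intervalIntegral.integral_const_mul, integral_exp_mul_add hk', hexp, mul_zero, zero_add]
      field_simp

lemma integral_middle_maxMinThreshold (hp : 0 < p) (hq : 0 < q) (hx : 0 ≤ x)
    (hk : s * p - r * q ≠ 0) :
    ∫ u in x / (p + q)..x / p, r * exp (-(r * u)) * exp (-(s * max (maxMinThreshold p q x u) 0)) =
      r * q / (s * p - r * q) * (exp (-(r * x / p)) - exp (-((r + s) * x / (p + q)))) := by
  have hk' : s * p / q - r ≠ 0 := by
    rw [div_sub' hq.ne']
    exact div_ne_zero (fun h => hk (by linarith)) hq.ne'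
  have hu₀u₁ : x / (p + q) ≤ x / p := div_le_div_of_nonneg_left hx hp (by linarith)
  calc _ = ∫ u in x / (p + q)..x / p, r * exp ((s * p / q - r) * u + -(s * x / q)) := by
        refine intervalIntegral.integral_congr_ae (ae_of_all _ fun u hu => ?_)
        rw [uIoc_of_le hu₀u₁] at hu
        have hux : ¬ (p + q) * u ≤ x := not_le.2 ((div_lt_iff₀' (by positivity)).1 hu.1)
        have hpu : p * u ≤ x := (le_div_iff₀' hp).1 hu.2
        have hthr : maxMinThreshold p q x u = (x - p * u) / q := if_neg hux
        rw [hthr, max_eq_left (div_nonneg (by linarith) hq.le), mul_assoc, ← exp_add]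
        congr 2
        field_simp
        ring
    _ = _ := by
      have hexp₀ : (s * p / q - r) * (x / (p + q)) + -(s * x / q) = -((r + s) * x / (p + q)) := by
        field_simp
        ring
      have hexp₁ : (s * p / q - r) * (x / p) + -(s * x / q) = -(r * x / p) := by
        field_simp
        ring
      rw [intervalIntegral.integral_const_mul, integral_exp_mul_add hk', hexp₀, hexp₁]
      field_simp

lemma integral_upper_maxMinThreshold (hr : 0 < r) (hp : 0 < p) (hq : 0 < q) (hx : 0 ≤ x) :
    ∫ u in Ioi (x / p), r * exp (-(r * u)) * exp (-(s * max (maxMinThreshold p q x u) 0)) =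
      exp (-(r * x / p)) := by
  calc _ = ∫ u in Ioi (x / p), r * exp (-r * u) := by
        refine setIntegral_congr_fun measurableSet_Ioi fun u hu => ?_
        have hpu : x < p * u := (div_lt_iff₀' hp).1 hu
        have hux : ¬ (p + q) * u ≤ x := by nlinarith [div_nonneg hx hp.le, mem_Ioi.1 hu]
        have hthr : maxMinThreshold p q x u = (x - p * u) / q := if_neg hux
        rw [hthr, max_eq_right (div_nonpos_of_nonpos_of_nonneg (by linarith) hq.le), mul_zero,
          neg_zero, exp_zero, mul_one, neg_mul]
    _ = _ := by
      rw [integral_const_mul, integral_exp_mul_Ioi (neg_lt_zero.2 hr)]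
      field_simp

lemma integral_expMeasure_exp_neg_mul_max_maxMinThreshold (hr : 0 < r) (hs : 0 < s)
    (hp : 0 < p) (hq : 0 < q) (hx : 0 ≤ x) (hk₁ : s * q - r * p ≠ 0) (hk₂ : s * p - r * q ≠ 0) :
    ∫ u, exp (-(s * max (maxMinThreshold p q x u) 0)) ∂expMeasure r =
      r * p / (s * q - r * p) * (exp (-((r + s) * x / (p + q))) - exp (-(s * x / p)))
        + r * q / (s * p - r * q) * (exp (-(r * x / p)) - exp (-((r + s) * x / (p + q))))
        + exp (-(r * x / p)) := by
  rw [integral_expMeasure_eq_integral_Ioi hr]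
  have hg : IntegrableOn
      (fun u => r * exp (-(r * u)) * exp (-(s * max (maxMinThreshold p q x u) 0))) (Ioi 0) := by
    have hdens := (exp_neg_integrableOn_Ioi 0 hr).const_mul r
    simp_rw [neg_mul] at hdens
    have := measurable_maxMinThreshold p q x
    refine hdens.mul_bdd (c := 1) (by fun_prop) (ae_of_all _ fun u => ?_)
    rw [norm_eq_abs, abs_exp, exp_le_one_iff, neg_nonpos]
    exact mul_nonneg hs.le (le_max_right _ _)
  have hii : ∀ a b, 0 ≤ a → a ≤ b → IntervalIntegrable
      (fun u => r * exp (-(r * u)) * exp (-(s * max (maxMinThreshold p q x u) 0))) volume a b :=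
    fun a b ha hab => (intervalIntegrable_iff_integrableOn_Ioc_of_le hab).2
      (hg.mono_set (Ioc_subset_Ioi_self.trans (Ioi_subset_Ioi ha)))
  have hu₀ : 0 ≤ x / (p + q) := by positivity
  have hu₀u₁ : x / (p + q) ≤ x / p := div_le_div_of_nonneg_left hx hp (by linarith)
  rw [← intervalIntegral.integral_interval_add_Ioi hg
      (hg.mono_set (Ioi_subset_Ioi (hu₀.trans hu₀u₁))),
    ← intervalIntegral.integral_add_adjacent_intervals (hii _ _ le_rfl hu₀) (hii _ _ hu₀ hu₀u₁),
    integral_lower_maxMinThreshold hp hq hx hk₁, integral_middle_maxMinThreshold hp hq hx hk₂,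
    integral_upper_maxMinThreshold hr hp hq hx]

end ThresholdIntegral

section RateAlgebra

variable {r s p q τ₁ τ₂ c : ℝ}

lemma denom_eq_of_rates (hp : 0 < p) (hq : 0 < q) (hτ₁ : τ₁ = r / p) (hτ₂ : τ₂ = s / p)
    (hc : c = p / (p + q)) :
    c * τ₁ + c * τ₂ - τ₁ = (s * p - r * q) / (p * (p + q)) := by
  have : 0 < p + q := by linarith
  rw [hτ₁, hτ₂, hc]
  field_simp
  ring

lemma survival_formula_eq_tau_form (hp : 0 < p) (hq : 0 < q) (hτ₁ : τ₁ = r / p)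
    (hτ₂ : τ₂ = s / p) (hc : c = p / (p + q)) (hk₁ : s * q - r * p ≠ 0)
    (hk₂ : s * p - r * q ≠ 0) (x : ℝ) :
    r * p / (s * q - r * p) * (exp (-((r + s) * x / (p + q))) - exp (-(s * x / p)))
        + r * q / (s * p - r * q) * (exp (-(r * x / p)) - exp (-((r + s) * x / (p + q))))
        + exp (-(r * x / p)) =
      exp (-x * τ₁) * (c * τ₂) / (c * τ₁ + c * τ₂ - τ₁)
      + exp (-x * τ₂) * (c * τ₁) / (c * τ₁ + c * τ₂ - τ₂)
      + exp (-c * x * (τ₁ + τ₂)) * (τ₁ * τ₂ * (1 - 2 * c)) /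
          ((c * τ₁ + c * τ₂ - τ₁) * (c * τ₁ + c * τ₂ - τ₂)) := by
  have hD₁ := denom_eq_of_rates hp hq hτ₁ hτ₂ hc
  have hD₂ : c * τ₁ + c * τ₂ - τ₂ = -(s * q - r * p) / (p * (p + q)) := by
    rw [add_comm (c * τ₁), denom_eq_of_rates hp hq hτ₂ hτ₁ hc]
    ring
  have h₁ : -x * τ₁ = -(r * x / p) := by rw [hτ₁]; ring
  have h₂ : -x * τ₂ = -(s * x / p) := by rw [hτ₂]; ring
  have h₃ : -c * x * (τ₁ + τ₂) = -((r + s) * x / (p + q)) := by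
    have : 0 < p + q := by linarith
    rw [hτ₁, hτ₂, hc]
    field_simp
  rw [hD₁, hD₂, h₁, h₂, h₃, hτ₁, hτ₂, hc]
  generalize hK₁ : s * q - r * p = K₁ at hk₁
  generalize hK₂ : s * p - r * q = K₂ at hk₂
  field_simp
  rw [← hK₁, ← hK₂]
  ring

end RateAlgebra

theorem stmt8 {Ω : Type*} [MeasurableSpace Ω] (μ : Measure Ω) [IsProbabilityMeasure μ]
    (γ₁ γ₂ : Ω → ℝ) (hm₁ : Measurable γ₁) (hm₂ : Measurable γ₂)
    (hindep : IndepFun γ₁ γ₂ μ)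
    (hnn₁ : ∀ ω, 0 ≤ γ₁ ω) (hnn₂ : ∀ ω, 0 ≤ γ₂ ω)
    (μ₁ μ₂ : ℝ) (hμ₁ : 0 < μ₁) (hμ₂ : 0 < μ₂)
    (hcdf₁ : ∀ x : ℝ, 0 ≤ x → (μ {ω | γ₁ ω ≤ x}).toReal = 1 - Real.exp (-x/μ₁))
    (hcdf₂ : ∀ x : ℝ, 0 ≤ x → (μ {ω | γ₂ ω ≤ x}).toReal = 1 - Real.exp (-x/μ₂))
    (a b : ℝ) (hb : 0 < b) (hab : 0 < a + b)
    (τ₁ τ₂ c : ℝ) (hτ₁ : τ₁ = 1/((a+b)*μ₁)) (hτ₂ : τ₂ = 1/((a+b)*μ₂))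
    (hc : c = (a+b)/(a+2*b))
    (hden₁ : c*τ₁ + c*τ₂ - τ₁ ≠ 0) (hden₂ : c*τ₁ + c*τ₂ - τ₂ ≠ 0)
    (x : ℝ) (hx : 0 ≤ x) :
    (μ {ω | x < a * max (γ₁ ω) (γ₂ ω) + b * (γ₁ ω + γ₂ ω)}).toReal =
      Real.exp (-x*τ₁) * (c*τ₂) / (c*τ₁ + c*τ₂ - τ₁)
      + Real.exp (-x*τ₂) * (c*τ₁) / (c*τ₁ + c*τ₂ - τ₂)
      + Real.exp (-c*x*(τ₁+τ₂)) * (τ₁*τ₂*(1-2*c)) /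
          ((c*τ₁ + c*τ₂ - τ₁) * (c*τ₁ + c*τ₂ - τ₂)) := by
  have hτ₁' : τ₁ = μ₁⁻¹ / (a + b) := by rw [hτ₁]; field_simp
  have hτ₂' : τ₂ = μ₂⁻¹ / (a + b) := by rw [hτ₂]; field_simp
  have hc' : c = (a + b) / (a + b + b) := by rw [hc]; ring
  have hk₁ : μ₂⁻¹ * b - μ₁⁻¹ * (a + b) ≠ 0 := by
    rw [add_comm (c * τ₁), denom_eq_of_rates hab hb hτ₂' hτ₁' hc'] at hden₂
    exact fun h => (div_ne_zero_iff.1 hden₂).1 (by linarith)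
  have hk₂ : μ₂⁻¹ * (a + b) - μ₁⁻¹ * b ≠ 0 := by
    rw [denom_eq_of_rates hab hb hτ₁' hτ₂' hc'] at hden₁
    exact (div_ne_zero_iff.1 hden₁).1
  have hevent : {ω | x < a * max (γ₁ ω) (γ₂ ω) + b * (γ₁ ω + γ₂ ω)} =
      {ω | maxMinThreshold (a + b) b x (γ₁ ω) < γ₂ ω} := by
    simp only [mul_max_add_mul_add_eq, lt_mul_max_add_mul_min_iff hab hb]
  rw [← measureReal_def, hevent, hindep.measureReal_lt_eq_integral_exp hm₁ hm₂ (inv_pos.2 hμ₂)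
      (map_eq_expMeasure_of_cdf hm₂ hnn₂ hμ₂ hcdf₂) (measurable_maxMinThreshold _ _ _),
    map_eq_expMeasure_of_cdf hm₁ hnn₁ hμ₁ hcdf₁,
    integral_expMeasure_exp_neg_mul_max_maxMinThreshold (inv_pos.2 hμ₁) (inv_pos.2 hμ₂) hab hb
      hx hk₁ hk₂, survival_formula_eq_tau_form hab hb hτ₁' hτ₂' hc' hk₁ hk₂]
end
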